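/- arXiv:2505.16403 — 5 statements merged into one kernel-verified Lean document; each statement's English description precedes it below -/
import Mathlib

section
/- Suppose V : ℝ → ℝ is differentiable, nonnegative, and satisfies V'(t) ≤ -α·√(2·V(t)) for all t ≥ 0, where α > 0. Then V(T) = 0 for T = √(2·V(0))/α, i.e., V reaches zero in finite time. -/
theorem stmt_4 (V : ℝ → ℝ) (α : ℝ) (hα : 0 < α) (hdiff : Differentiable ℝ V)
    (hnonneg : ∀ t, 0 ≤ V t)
    (hode : ∀ t ≥ (0 : ℝ), deriv V t ≤ -α * Real.sqrt (2 * V t)) :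
    V (Real.sqrt (2 * V 0) / α) = 0 := by
  set T : ℝ := Real.sqrt (2 * V 0) / α with hT
  have hT0 : 0 ≤ T := div_nonneg (Real.sqrt_nonneg _) hα.le
  have hanti : AntitoneOn V (Set.Ici (0 : ℝ)) := by
    apply antitoneOn_of_deriv_nonpos (convex_Ici 0) hdiff.continuous.continuousOn
      hdiff.differentiableOn
    intro t ht
    rw [interior_Ici] at ht
    have h1 := hode t ht.le
    have hs : 0 ≤ Real.sqrt (2 * V t) := Real.sqrt_nonneg _
    nlinarith
  by_contra hne
  have hVT : 0 < V T := lt_of_le_of_ne (hnonneg T) (Ne.symm hne)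
  have hpos : ∀ t ∈ Set.Icc (0 : ℝ) T, 0 < V t := fun t ht =>
    lt_of_lt_of_le hVT (hanti (Set.mem_Ici.mpr ht.1) (Set.mem_Ici.mpr hT0) ht.2)
  set g : ℝ → ℝ := fun t => Real.sqrt (2 * V t) + α * t with hg
  have key : ∀ t ∈ Set.Ioo (0 : ℝ) T,
      HasDerivAt g (deriv V t / Real.sqrt (2 * V t) + α) t := by
    intro t ht
    have hVt : 0 < V t := hpos t ⟨ht.1.le, ht.2.le⟩
    have h2V : (2 * V t) ≠ 0 := by positivity
    have h2 : HasDerivAt (fun s => 2 * V s) (2 * deriv V t) t :=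
      (hdiff t).hasDerivAt.const_mul 2
    have hsq := h2.sqrt h2V
    have hlin : HasDerivAt (fun s : ℝ => α * s) α t := by
      simpa using (hasDerivAt_id t).const_mul α
    have := hsq.add hlin
    have heq : 2 * deriv V t / (2 * Real.sqrt (2 * V t)) =
        deriv V t / Real.sqrt (2 * V t) := by
      rw [mul_div_mul_left _ _ (two_ne_zero)]
    rwa [heq] at this
  have hgc : ContinuousOn g (Set.Icc 0 T) :=
    ((Real.continuous_sqrt.comp (continuous_const.mul hdiff.continuous)).add
      (continuous_const.mul continuous_id)).continuousOn
  have hganti : AntitoneOn g (Set.Icc 0 T) := by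
    apply antitoneOn_of_deriv_nonpos (convex_Icc 0 T) hgc
    · intro t ht
      rw [interior_Icc] at ht
      exact (key t ht).differentiableAt.differentiableWithinAt
    · intro t ht
      rw [interior_Icc] at ht
      rw [(key t ht).deriv]
      have hVt : 0 < V t := hpos t ⟨ht.1.le, ht.2.le⟩
      have hs : 0 < Real.sqrt (2 * V t) := Real.sqrt_pos.mpr (by linarith)
      have h1 := hode t ht.1.le
      have : deriv V t / Real.sqrt (2 * V t) ≤ -α := by
        rw [div_le_iff₀ hs]; linarith
      linarith
  have hle : g T ≤ g 0 := hganti (Set.left_mem_Icc.mpr hT0) (Set.right_mem_Icc.mpr hT0) hT0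
  have hg0 : g 0 = α * T := by
    simp [hg, hT]
    field_simp
  have hsT : 0 < Real.sqrt (2 * V T) := Real.sqrt_pos.mpr (by linarith)
  rw [hg0] at hle
  simp only [hg] at hle
  linarith
end

section
/- Let s : ℝ → ℝ be differentiable with s'(t) = -η·sign(s(t)) for all t, where η > 0. If s(0) > 0, then s(t) = s(0) - η·t for all t ∈ [0, s(0)/η], and in particular s(s(0)/η) = 0. -/
theorem stmt_8 (s : ℝ → ℝ) (η : ℝ) (hη : 0 < η) (hdiff : Differentiable ℝ s)
    (hode : ∀ t, deriv s t = -η * Real.sign (s t)) (h0 : 0 < s 0) :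
    (∀ t ∈ Set.Icc (0 : ℝ) (s 0 / η), s t = s 0 - η * t) ∧ s (s 0 / η) = 0 := by
  set T := s 0 / η with hT
  have hgdiff : Differentiable ℝ (fun t => s t + η * t) :=
    hdiff.add ((differentiable_const _).mul differentiable_id)
  have hsign_le : ∀ x : ℝ, Real.sign x ≤ 1 := by
    intro x
    rcases Real.sign_apply_eq x with h | h | h <;> rw [h] <;> norm_num
  have hmono : Monotone (fun t => s t + η * t) := by
    apply monotone_of_deriv_nonneg hgdiff
    intro x
    have : deriv (fun t => s t + η * t) x = deriv s x + η := by
      have h1 : HasDerivAt (fun t => s t + η * t) (deriv s x + η) x := by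
        exact ((hdiff x).hasDerivAt.add ((hasDerivAt_id x).const_mul η)).congr_deriv (by ring)
      exact h1.deriv
    rw [this, hode x]
    nlinarith [hsign_le (s x)]
  -- lower bound: s t ≥ s 0 - η t for t ≥ 0
  have hlow : ∀ t : ℝ, 0 ≤ t → s 0 - η * t ≤ s t := by
    intro t ht
    have := hmono ht
    simp only [mul_zero, add_zero] at this
    linarith
  -- on [0, T), s is positive, so deriv s = -η
  have hpos : ∀ x ∈ Set.Ico (0 : ℝ) T, 0 < s x := by
    intro x ⟨hx0, hxT⟩
    have : η * x < s 0 := by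
      rw [hT] at hxT
      calc η * x < η * (s 0 / η) := by exact (mul_lt_mul_iff_right₀ hη).mpr hxT
        _ = s 0 := by field_simp
    linarith [hlow x hx0]
  have key : ∀ y ∈ Set.Icc (0 : ℝ) T, s y = s 0 - η * y := by
    apply eq_of_has_deriv_right_eq (f' := fun _ => -η)
    · intro x hx
      have hd : deriv s x = -η := by
        rw [hode x, Real.sign_of_pos (hpos x hx)]; ring
      exact (hd ▸ (hdiff x).hasDerivAt).hasDerivWithinAt
    · intro x _
      have : HasDerivAt (fun t => s 0 - η * t) (-η) x := by
        simpa using ((hasDerivAt_id x).const_mul η).const_sub (s 0)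
      exact this.hasDerivWithinAt
    · exact hdiff.continuous.continuousOn
    · exact (continuous_const.sub (continuous_const.mul continuous_id)).continuousOn
    · simp
  have hT0 : (0 : ℝ) ≤ T := le_of_lt (div_pos h0 hη)
  refine ⟨key, ?_⟩
  have := key T ⟨hT0, le_refl T⟩
  rw [this, hT]
  field_simp
  ring
end

section
/- Suppose s : ℝ → ℝ is differentiable and satisfies s(t)·s'(t) ≤ -η·|s(t)| for all t ≥ 0 with η > 0. Then for all t ≥ |s(0)|/η, s(t) = 0. -/
theorem stmt_9 (s : ℝ → ℝ) (η : ℝ) (hη : 0 < η) (hdiff : Differentiable ℝ s)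
    (hs : ∀ t ≥ (0 : ℝ), s t * deriv s t ≤ -η * |s t|) :
    ∀ t ≥ |s 0| / η, s t = 0 := by
  intro t ht
  set T := |s 0| / η with hT
  have hT0 : 0 ≤ T := div_nonneg (abs_nonneg _) hη.le
  have hsq : AntitoneOn (fun x => s x ^ 2) (Set.Ici 0) := by
    apply antitoneOn_of_deriv_nonpos (convex_Ici 0)
    · exact ((hdiff.continuous.pow 2).continuousOn)
    · intro x hx
      exact ((hdiff x).pow 2).differentiableWithinAt
    · intro x hx
      rw [interior_Ici] at hx
      have hd : deriv (fun x => s x ^ 2) x = 2 * s x ^ 1 * deriv s x :=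
        ((hdiff x).hasDerivAt.pow 2).deriv
      rw [hd]
      have h1 := hs x hx.le
      have h2 : -η * |s x| ≤ 0 := by
        have := abs_nonneg (s x)
        nlinarith
      nlinarith
  suffices h0 : s T = 0 by
    have hkey := hsq (Set.mem_Ici.mpr hT0) (Set.mem_Ici.mpr (hT0.trans ht)) ht
    simp only [h0] at hkey
    nlinarith [sq_nonneg (s t)]
  by_contra hne
  have hnz : ∀ x ∈ Set.Icc (0:ℝ) T, s x ≠ 0 := by
    intro x hx h0
    apply hne
    have hkey := hsq (Set.mem_Ici.mpr hx.1) (Set.mem_Ici.mpr hT0) hx.2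
    simp only [h0] at hkey
    nlinarith [sq_nonneg (s T)]
  have hs0 : s 0 ≠ 0 := hnz 0 ⟨le_refl 0, hT0⟩
  rcases hs0.lt_or_gt with hneg | hpos
  · -- s 0 < 0, show s < 0 on [0,T]
    have hall : ∀ x ∈ Set.Icc (0:ℝ) T, s x < 0 := by
      intro x hx
      rcases (hnz x hx).lt_or_gt with h | h
      · exact h
      · exfalso
        obtain ⟨c, hc, hc0⟩ := intermediate_value_Icc hx.1
          (hdiff.continuous.continuousOn) ⟨hneg.le, h.le⟩
        exact hnz c ⟨hc.1, hc.2.trans hx.2⟩ hc0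
    have hderiv : ∀ x ∈ Set.Icc (0:ℝ) T, η ≤ deriv s x := by
      intro x hx
      have h1 := hs x hx.1
      have h2 : |s x| = -(s x) := abs_of_neg (hall x hx)
      rw [h2] at h1
      have h3 := hall x hx
      nlinarith
    have hmono : AntitoneOn (fun x => -s x + η * x) (Set.Icc 0 T) := by
      apply antitoneOn_of_deriv_nonpos (convex_Icc 0 T)
      · exact ((hdiff.continuous.neg.add (continuous_const.mul continuous_id)).continuousOn)
      · intro x hx
        exact ((hdiff x).neg.add ((differentiable_const η).mul differentiable_id x)).differentiableWithinAt
      · intro x hx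
        rw [interior_Icc] at hx
        have hd : HasDerivAt (fun x => -s x + η * x) (-deriv s x + η * 1) x :=
          (hdiff x).hasDerivAt.neg.add ((hasDerivAt_id x).const_mul η)
        rw [hd.deriv]
        have := hderiv x ⟨hx.1.le, hx.2.le⟩
        linarith
    have hle := hmono (Set.left_mem_Icc.mpr hT0) (Set.right_mem_Icc.mpr hT0) hT0
    have hle' : -s T + η * T ≤ -s 0 + η * 0 := hle
    have hηT : η * T = |s 0| := by
      rw [hT]; field_simp
    have habs : |s 0| = -(s 0) := abs_of_neg hneg
    have hsT := hall T (Set.right_mem_Icc.mpr hT0)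
    nlinarith
  · -- s 0 > 0
    have hall : ∀ x ∈ Set.Icc (0:ℝ) T, 0 < s x := by
      intro x hx
      rcases (hnz x hx).lt_or_gt with h | h
      · exfalso
        obtain ⟨c, hc, hc0⟩ := intermediate_value_Icc' hx.1
          (hdiff.continuous.continuousOn) ⟨h.le, hpos.le⟩
        exact hnz c ⟨hc.1, hc.2.trans hx.2⟩ hc0
      · exact h
    have hderiv : ∀ x ∈ Set.Icc (0:ℝ) T, deriv s x ≤ -η := by
      intro x hx
      have h1 := hs x hx.1
      have h2 : |s x| = s x := abs_of_pos (hall x hx)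
      rw [h2] at h1
      have h3 := hall x hx
      nlinarith
    have hmono : AntitoneOn (fun x => s x + η * x) (Set.Icc 0 T) := by
      apply antitoneOn_of_deriv_nonpos (convex_Icc 0 T)
      · exact ((hdiff.continuous.add (continuous_const.mul continuous_id)).continuousOn)
      · intro x hx
        exact ((hdiff x).add ((differentiable_const η).mul differentiable_id x)).differentiableWithinAt
      · intro x hx
        rw [interior_Icc] at hx
        have hd : HasDerivAt (fun x => s x + η * x) (deriv s x + η * 1) x :=
          (hdiff x).hasDerivAt.add ((hasDerivAt_id x).const_mul η)
        rw [hd.deriv]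
        have := hderiv x ⟨hx.1.le, hx.2.le⟩
        linarith
    have hle := hmono (Set.left_mem_Icc.mpr hT0) (Set.right_mem_Icc.mpr hT0) hT0
    have hle' : s T + η * T ≤ s 0 + η * 0 := hle
    have hηT : η * T = |s 0| := by
      rw [hT]; field_simp
    have habs : |s 0| = s 0 := abs_of_pos hpos
    have hsT := hall T (Set.right_mem_Icc.mpr hT0)
    nlinarith
end

section
/- Suppose V : ℝ → ℝ is differentiable, V(t) ≥ 0 for all t, and V'(t) ≤ -c·V(t)^(1/2) for all t ≥ 0 with c > 0. Then the function W(t) = √(V(t)) satisfies W(t) ≤ max (W(0) - (c/2)·t) 0 for all t ≥ 0. -/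
theorem stmt_15 (V : ℝ → ℝ) (c : ℝ) (hc : 0 < c) (hdiff : Differentiable ℝ V)
    (hnonneg : ∀ t, 0 ≤ V t)
    (hode : ∀ t ≥ (0 : ℝ), deriv V t ≤ -c * Real.sqrt (V t)) :
    ∀ t ≥ (0 : ℝ), Real.sqrt (V t) ≤ max (Real.sqrt (V 0) - (c / 2) * t) 0 := by
  intro t ht
  rcases eq_or_lt_of_le (hnonneg t) with h0 | hVt
  · rw [← h0, Real.sqrt_zero]; exact le_max_right _ _
  have hVanti : AntitoneOn V (Set.Icc 0 t) := by
    apply antitoneOn_of_deriv_nonpos (convex_Icc 0 t) hdiff.continuous.continuousOn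
      (fun s _ => (hdiff s).differentiableWithinAt)
    intro s hs
    rw [interior_Icc] at hs
    have h1 := hode s hs.1.le
    have h2 : -c * Real.sqrt (V s) ≤ 0 :=
      mul_nonpos_of_nonpos_of_nonneg (by linarith) (Real.sqrt_nonneg _)
    linarith
  have hVpos : ∀ s ∈ Set.Icc (0:ℝ) t, 0 < V s := fun s hs =>
    lt_of_lt_of_le hVt (hVanti hs (Set.right_mem_Icc.mpr ht) hs.2)
  set g : ℝ → ℝ := fun s => Real.sqrt (V s) + (c/2) * s with hg
  have hganti : AntitoneOn g (Set.Icc 0 t) := by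
    have hd : ∀ s ∈ interior (Set.Icc (0:ℝ) t),
        HasDerivAt g (1/(2*Real.sqrt (V s)) * deriv V s + c/2 * 1) s := by
      intro s hs
      rw [interior_Icc] at hs
      have hVs := hVpos s ⟨hs.1.le, hs.2.le⟩
      have hW : HasDerivAt (fun u => Real.sqrt (V u)) (1/(2*Real.sqrt (V s)) * deriv V s) s :=
        (Real.hasDerivAt_sqrt hVs.ne').comp s (hdiff s).hasDerivAt
      exact hW.add ((hasDerivAt_id s).const_mul (c/2))
    apply antitoneOn_of_deriv_nonpos (convex_Icc 0 t)
    · exact ((hdiff.continuous.sqrt).add (continuous_const.mul continuous_id)).continuousOn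
    · exact fun s hs => (hd s hs).differentiableAt.differentiableWithinAt
    · intro s hs
      rw [(hd s hs).deriv]
      rw [interior_Icc] at hs
      have hVs := hVpos s ⟨hs.1.le, hs.2.le⟩
      have hsq : 0 < Real.sqrt (V s) := Real.sqrt_pos.mpr hVs
      have h1 : 1/(2*Real.sqrt (V s)) * deriv V s
          ≤ 1/(2*Real.sqrt (V s)) * (-c * Real.sqrt (V s)) :=
        mul_le_mul_of_nonneg_left (hode s hs.1.le) (by positivity)
      have h2 : 1/(2*Real.sqrt (V s)) * (-c * Real.sqrt (V s)) = -(c/2) := by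
        field_simp
      nlinarith
  have hkey := hganti (Set.left_mem_Icc.mpr ht) (Set.right_mem_Icc.mpr ht) ht
  simp only [hg] at hkey
  have : Real.sqrt (V t) ≤ Real.sqrt (V 0) - (c/2)*t := by linarith
  exact le_max_of_le_left this
end

section
/- Let s : ℝ → ℝ be continuously differentiable with s(t)·s'(t) < 0 whenever s(t) ≠ 0. Then |s| is nonincreasing: for all t₁ ≤ t₂, |s(t₂)| ≤ |s(t₁)|. -/
theorem stmt_16 (s : ℝ → ℝ) (hdiff : Differentiable ℝ s)
    (hcont : Continuous (deriv s))
    (hs : ∀ t, s t ≠ 0 → s t * deriv s t < 0) :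
    ∀ t₁ t₂ : ℝ, t₁ ≤ t₂ → |s t₂| ≤ |s t₁| := by
  have hf : Differentiable ℝ (fun t => s t ^ 2) := hdiff.pow 2
  have hderiv : ∀ t, deriv (fun t => s t ^ 2) t = 2 * s t * deriv s t := by
    intro t
    simpa [mul_comm, mul_assoc] using deriv_fun_pow (n := 2) (hdiff t)
  have hanti : Antitone (fun t => s t ^ 2) := by
    apply antitone_of_deriv_nonpos hf
    intro t
    rw [hderiv]
    by_cases h : s t = 0
    · simp [h]
    · have := hs t h
      nlinarith
  intro t₁ t₂ h
  have := hanti h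
  have h1 : |s t₂| ^ 2 ≤ |s t₁| ^ 2 := by simpa [sq_abs] using this
  nlinarith [abs_nonneg (s t₁), abs_nonneg (s t₂)]
end
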